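/- Let β > 0, α, δ ∈ ℝ, L > 0, T > 0. Suppose y : [0,L]×[0,T] → ℂ is smooth and satisfies i y_t + iβ y_{xxx} + α y_{xx} + iδ y_x = 0 on (0,L)×(0,T), with y(0,t) = y(L,t) = y_x(L,t) = 0 for all t ∈ [0,T]. Then for every t ∈ [0,T], ∫₀ᴸ |y(x,t)|² dx + β ∫₀ᵗ |y_x(0,τ)|² dτ = ∫₀ᴸ |y(x,0)|² dx. -/

import Mathlib

noncomputable section

open MeasureTheory

/-- Partial derivative in the first variable. -/
def pd1 (f : ℝ → ℝ → ℂ) : ℝ → ℝ → ℂ := fun x y => deriv (fun x' => f x' y) x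

/-- Partial derivative in the second variable. -/
def pd2 (f : ℝ → ℝ → ℂ) : ℝ → ℝ → ℂ := fun x y => deriv (fun y' => f x y') y

open Function

lemma pd1_hasDerivAt {f : ℝ → ℝ → ℂ} (hf : ContDiff ℝ (⊤ : ℕ∞) (uncurry f)) (x t : ℝ) :
    HasDerivAt (fun x' => f x' t) (pd1 f x t) x := by
  have h1 : HasDerivAt (fun x' : ℝ => (x', t)) ((1:ℝ), (0:ℝ)) x :=
    (hasDerivAt_id x).prodMk (hasDerivAt_const x t)
  have h2 : HasDerivAt (fun x' => f x' t) (fderiv ℝ (uncurry f) (x, t) (1, 0)) x :=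
    by have := (hf.differentiable (by simp) (x, t)).hasFDerivAt.comp_hasDerivAt x h1; exact this
  simpa [pd1, h2.deriv] using h2

lemma pd1_eq {f : ℝ → ℝ → ℂ} (hf : ContDiff ℝ (⊤ : ℕ∞) (uncurry f)) (x t : ℝ) :
    pd1 f x t = fderiv ℝ (uncurry f) (x, t) (1, 0) := by
  have h1 : HasDerivAt (fun x' : ℝ => (x', t)) ((1:ℝ), (0:ℝ)) x :=
    (hasDerivAt_id x).prodMk (hasDerivAt_const x t)
  have h2 : HasDerivAt (fun x' => f x' t) (fderiv ℝ (uncurry f) (x, t) (1, 0)) x :=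
    by have := (hf.differentiable (by simp) (x, t)).hasFDerivAt.comp_hasDerivAt x h1; exact this
  simpa [pd1] using h2.deriv

lemma pd1_smooth {f : ℝ → ℝ → ℂ} (hf : ContDiff ℝ (⊤ : ℕ∞) (uncurry f)) :
    ContDiff ℝ (⊤ : ℕ∞) (uncurry (pd1 f)) := by
  have : (uncurry (pd1 f)) = fun p : ℝ × ℝ => fderiv ℝ (uncurry f) p (1, 0) := by
    ext ⟨x, t⟩; exact pd1_eq hf x t
  rw [this]
  exact (hf.fderiv_right (by simp)).clm_apply contDiff_const

lemma pd2_hasDerivAt {f : ℝ → ℝ → ℂ} (hf : ContDiff ℝ (⊤ : ℕ∞) (uncurry f)) (x t : ℝ) :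
    HasDerivAt (fun t' => f x t') (pd2 f x t) t := by
  have h1 : HasDerivAt (fun t' : ℝ => (x, t')) ((0:ℝ), (1:ℝ)) t :=
    (hasDerivAt_const t x).prodMk (hasDerivAt_id t)
  have h2 : HasDerivAt (fun t' => f x t') (fderiv ℝ (uncurry f) (x, t) (0, 1)) t :=
    (hf.differentiable (by simp) (x, t)).hasFDerivAt.comp_hasDerivAt t h1
  simpa [pd2, h2.deriv] using h2

lemma pd2_eq {f : ℝ → ℝ → ℂ} (hf : ContDiff ℝ (⊤ : ℕ∞) (uncurry f)) (x t : ℝ) :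
    pd2 f x t = fderiv ℝ (uncurry f) (x, t) (0, 1) := by
  have h1 : HasDerivAt (fun t' : ℝ => (x, t')) ((0:ℝ), (1:ℝ)) t :=
    (hasDerivAt_const t x).prodMk (hasDerivAt_id t)
  have h2 : HasDerivAt (fun t' => f x t') (fderiv ℝ (uncurry f) (x, t) (0, 1)) t :=
    (hf.differentiable (by simp) (x, t)).hasFDerivAt.comp_hasDerivAt t h1
  simpa [pd2] using h2.deriv

lemma pd2_smooth {f : ℝ → ℝ → ℂ} (hf : ContDiff ℝ (⊤ : ℕ∞) (uncurry f)) :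
    ContDiff ℝ (⊤ : ℕ∞) (uncurry (pd2 f)) := by
  have : (uncurry (pd2 f)) = fun p : ℝ × ℝ => fderiv ℝ (uncurry f) p (0, 1) := by
    ext ⟨x, t⟩; exact pd2_eq hf x t
  rw [this]
  exact (hf.fderiv_right (by simp)).clm_apply contDiff_const

theorem stmt7 (β α δ L T : ℝ) (hβ : 0 < β) (hL : 0 < L) (hT : 0 < T)
    (y : ℝ → ℝ → ℂ) (hy : ContDiff ℝ (⊤ : ℕ∞) (Function.uncurry y))
    (hpde : ∀ x ∈ Set.Ioo (0:ℝ) L, ∀ t ∈ Set.Ioo (0:ℝ) T,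
      Complex.I * pd2 y x t + Complex.I * (β : ℂ) * pd1 (pd1 (pd1 y)) x t
        + (α : ℂ) * pd1 (pd1 y) x t + Complex.I * (δ : ℂ) * pd1 y x t = 0)
    (hbc : ∀ t ∈ Set.Icc (0:ℝ) T, y 0 t = 0 ∧ y L t = 0 ∧ pd1 y L t = 0) :
    ∀ t ∈ Set.Icc (0:ℝ) T,
      (∫ x in (0:ℝ)..L, ‖y x t‖ ^ 2)
        + β * ∫ τ in (0:ℝ)..t, ‖pd1 y 0 τ‖ ^ 2
      = ∫ x in (0:ℝ)..L, ‖y x 0‖ ^ 2 := by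
  have h1 : ContDiff ℝ (⊤ : ℕ∞) (uncurry (pd1 y)) := pd1_smooth hy
  have h2 : ContDiff ℝ (⊤ : ℕ∞) (uncurry (pd1 (pd1 y))) := pd1_smooth h1
  have h3 : ContDiff ℝ (⊤ : ℕ∞) (uncurry (pd1 (pd1 (pd1 y)))) := pd1_smooth h2
  have h4 : ContDiff ℝ (⊤ : ℕ∞) (uncurry (pd2 y)) := pd2_smooth hy
  have cy : Continuous (uncurry y) := hy.continuous
  -- extend the PDE to the closed rectangle
  have hpde' : ∀ x ∈ Set.Icc (0:ℝ) L, ∀ τ ∈ Set.Icc (0:ℝ) T,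
      pd2 y x τ = -(β:ℂ) * pd1 (pd1 (pd1 y)) x τ + Complex.I * (α:ℂ) * pd1 (pd1 y) x τ
        - (δ:ℂ) * pd1 y x τ := by
    have hPc : Continuous (fun p : ℝ × ℝ =>
        Complex.I * pd2 y p.1 p.2 + Complex.I * (β:ℂ) * pd1 (pd1 (pd1 y)) p.1 p.2
          + (α:ℂ) * pd1 (pd1 y) p.1 p.2 + Complex.I * (δ:ℂ) * pd1 y p.1 p.2) := by
      exact (((continuous_const.mul h4.continuous).add
        (continuous_const.mul h3.continuous)).add
        (continuous_const.mul h2.continuous)).add (continuous_const.mul h1.continuous)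
    have h0 : Set.EqOn (fun p : ℝ × ℝ =>
        Complex.I * pd2 y p.1 p.2 + Complex.I * (β:ℂ) * pd1 (pd1 (pd1 y)) p.1 p.2
          + (α:ℂ) * pd1 (pd1 y) p.1 p.2 + Complex.I * (δ:ℂ) * pd1 y p.1 p.2) 0
        (Set.Ioo 0 L ×ˢ Set.Ioo 0 T) := fun p hp => hpde p.1 hp.1 p.2 hp.2
    have h0' := h0.closure hPc continuous_const
    rw [closure_prod_eq, closure_Ioo hL.ne, closure_Ioo hT.ne] at h0'
    intro x hx τ hτ
    have hP := h0' (Set.mk_mem_prod hx hτ)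
    simp only [Pi.zero_apply] at hP
    linear_combination (-Complex.I) * hP
      + (pd2 y x τ + (β:ℂ) * pd1 (pd1 (pd1 y)) x τ + (δ:ℂ) * pd1 y x τ) * Complex.I_mul_I
  -- continuity of the t-derivative integrand (as a function of (t, x))
  have cFd : Continuous (fun p : ℝ × ℝ => 2 * ((star (y p.2 p.1)) * pd2 y p.2 p.1).re) := by
    apply continuous_const.mul
    apply Complex.continuous_re.comp
    exact (continuous_star.comp (cy.comp continuous_swap)).mul (h4.continuous.comp continuous_swap)
  -- energy derivative
  have key : ∀ τ ∈ Set.Icc (0:ℝ) T,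
      HasDerivAt (fun s => ∫ x in (0:ℝ)..L, ‖y x s‖ ^ 2)
        (-(β * ‖pd1 y 0 τ‖ ^ 2)) τ := by
    intro τ hτ
    -- pointwise t-derivative of |y|²
    have hdiff : ∀ (x s : ℝ), HasDerivAt (fun s' => ‖y x s'‖ ^ 2)
        (2 * ((star (y x s)) * pd2 y x s).re) s := by
      intro x s
      have hw := pd2_hasDerivAt hy x s
      have hre : HasDerivAt (fun s' => (y x s').re) (pd2 y x s).re s :=
        Complex.reCLM.hasFDerivAt.comp_hasDerivAt s hw
      have him : HasDerivAt (fun s' => (y x s').im) (pd2 y x s).im s :=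
        Complex.imCLM.hasFDerivAt.comp_hasDerivAt s hw
      have hsum := (hre.mul hre).add (him.mul him)
      have heq : (fun s' => ‖y x s'‖ ^ 2)
          = fun s' => (y x s').re * (y x s').re + (y x s').im * (y x s').im := by
        funext s'; rw [Complex.sq_norm, Complex.normSq_apply]
      rw [heq]
      refine hsum.congr_deriv ?_
      simp only [Complex.star_def, Complex.mul_re, Complex.conj_re, Complex.conj_im]
      ring
    -- uniform bound near τ
    obtain ⟨C, hC⟩ := ((isCompact_Icc (a := τ - 1) (b := τ + 1)).prod
      (isCompact_uIcc (a := (0:ℝ)) (b := L))).exists_bound_of_continuousOn cFd.continuousOn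
    have main := intervalIntegral.hasDerivAt_integral_of_dominated_loc_of_deriv_le
      (F := fun s x => ‖y x s‖ ^ 2)
      (F' := fun s x => 2 * ((star (y x s)) * pd2 y x s).re)
      (bound := fun _ => C) (a := (0:ℝ)) (b := L) (x₀ := τ) (μ := volume)
      (Metric.ball_mem_nhds τ zero_lt_one)
      (Filter.Eventually.of_forall (fun s =>
        (((continuous_norm.comp (cy.comp (continuous_id.prodMk continuous_const))).pow
          2).aestronglyMeasurable)))
      (((continuous_norm.comp (cy.comp (continuous_id.prodMk continuous_const))).pow
          2).intervalIntegrable _ _)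
      ((cFd.comp (continuous_const.prodMk continuous_id)).aestronglyMeasurable)
      (Filter.Eventually.of_forall (fun x => by
        intro hx s hs
        apply hC (s, x)
        constructor
        · rw [Metric.mem_ball, Real.dist_eq] at hs
          have := abs_lt.mp hs
          constructor <;> [linarith [this.1]; linarith [this.2]]
        · exact Set.Ioc_subset_Icc_self hx))
      intervalIntegrable_const
      (Filter.Eventually.of_forall (fun x => fun _ s _ => hdiff x s))
    -- compute the integral of the derivative
    have hder : ∀ x ∈ Set.uIcc (0:ℝ) L,
        HasDerivAt (fun x' => ((β:ℂ) * star (pd1 y x' τ) * pd1 y x' τ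
            - (2*(β:ℂ)) * star (y x' τ) * pd1 (pd1 y) x' τ
            + (2*(α:ℂ)*Complex.I) * star (y x' τ) * pd1 y x' τ
            - (δ:ℂ) * star (y x' τ) * y x' τ).re)
          (2 * ((star (y x τ)) * pd2 y x τ).re) x := by
      intro x hx
      rw [Set.uIcc_of_le hL.le] at hx
      have A := pd1_hasDerivAt hy x τ
      have B := pd1_hasDerivAt h1 x τ
      have Cd := pd1_hasDerivAt h2 x τ
      have T1 := (B.star.const_mul ((β:ℂ))).mul B
      have T2 := (A.star.const_mul (2*(β:ℂ))).mul Cd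
      have T3 := (A.star.const_mul (2*(α:ℂ)*Complex.I)).mul B
      have T4 := (A.star.const_mul ((δ:ℂ))).mul A
      have G := ((T1.sub T2).add T3).sub T4
      have hre := Complex.reCLM.hasFDerivAt.comp_hasDerivAt x G
      refine hre.congr_deriv ?_
      rw [hpde' x hx τ hτ]
      simp only [Complex.star_def, Complex.reCLM_apply, Complex.add_re, Complex.sub_re,
        Complex.mul_re, Complex.mul_im, Complex.add_im, Complex.sub_im, Complex.I_re,
        Complex.I_im, Complex.ofReal_re, Complex.ofReal_im, Complex.conj_re, Complex.conj_im,
        Complex.neg_re, Complex.neg_im, Complex.re_ofNat, Complex.im_ofNat]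
      ring
    have hintble : IntervalIntegrable (fun x => 2 * ((star (y x τ)) * pd2 y x τ).re)
        volume 0 L :=
      ((cFd.comp (continuous_const.prodMk continuous_id)).intervalIntegrable _ _)
    have hieq := intervalIntegral.integral_eq_sub_of_hasDerivAt hder hintble
    obtain ⟨hbc0, hbcL, hbcL'⟩ := hbc τ hτ
    rw [hbc0, hbcL, hbcL'] at hieq
    have hH : (∫ x in (0:ℝ)..L, 2 * ((star (y x τ)) * pd2 y x τ).re)
        = -(β * ‖pd1 y 0 τ‖ ^ 2) := by
      rw [hieq, Complex.sq_norm, Complex.normSq_apply]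
      simp only [star_zero, mul_zero, zero_mul, sub_zero, add_zero, zero_sub, neg_zero,
        Complex.star_def, Complex.mul_re, Complex.mul_im, Complex.conj_re, Complex.conj_im,
        Complex.ofReal_re, Complex.ofReal_im, Complex.zero_re, Complex.neg_re, Complex.sub_re,
        Complex.add_re, Complex.add_im, Complex.sub_im, Complex.neg_im, Complex.I_re,
        Complex.I_im, Complex.re_ofNat, Complex.im_ofNat]
      ring
    rw [hH] at main
    exact main.2
  -- conclude by FTC
  intro t ht
  have hsub : Set.uIcc (0:ℝ) t ⊆ Set.Icc 0 T := by
    rw [Set.uIcc_of_le ht.1]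
    exact Set.Icc_subset_Icc le_rfl ht.2
  have hcont : Continuous (fun τ => -(β * ‖pd1 y 0 τ‖ ^ 2)) := by
    apply Continuous.neg
    apply continuous_const.mul
    exact (continuous_norm.comp (h1.continuous.comp
      (continuous_const.prodMk continuous_id))).pow 2
  have hftc := intervalIntegral.integral_eq_sub_of_hasDerivAt
    (f := fun s => ∫ x in (0:ℝ)..L, ‖y x s‖ ^ 2)
    (fun τ hτ => key τ (hsub hτ)) (hcont.intervalIntegrable _ _)
  rw [intervalIntegral.integral_neg, intervalIntegral.integral_const_mul] at hftc
  linarith [hftc]
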